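/- arXiv:1310.2382 — 2 statements merged into one kernel-verified Lean document; each statement's English description precedes it below -/
import Mathlib

section
/- Let $(X,d,m)$ be a doubling metric measure space ($m(B_{2r}) \le 2^n m(B_r)$) whose heat kernel satisfies, for all $x,y$ and $t>0$, $p(x,y,t) \le \frac{C(n)}{[m(B(x,r_1)) m(B(y,r_2))]^{1/2}} \exp\{\alpha^2 t + \alpha(\phi(x)-\phi(y)) + |\alpha|(r_1+r_2)\}$ for every $1$-Lipschitz $\phi$, every $\alpha \in \mathbb{R}$, and all $r_1, r_2 > 0$ with $t \ge \frac14(r_1^2+r_2^2)$. Then, choosing $\phi(\cdot) = d(x,\cdot)$, $\alpha = (\phi(y)-\phi(x))/(2t)$, and $r_1 = r_2 = t/(\sqrt{t}+d(x,y))$, one obtains the Gaussian bound $p(x,y,t) \le C(n)\, m(B(y,\sqrt{t}))^{-1} \exp(-d(x,y)^2/(5t))$. -/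
open MeasureTheory Metric Set Real Filter

/-!
Take `φ = d(x, ·)`, `α = d/(2t)` and `r₁ = r₂ = r := t/(√t + d)` in Davies' bound, where
`d = d(x, y)`; the exponent becomes `-d²/(4t) + d/(√t + d) ≤ 1 - d²/(4t)`. The ball `B(y, √t)` lies
in both `B(x, √t + d)` and `B(y, √t + d)`, and doubling from radius `r` up to `√t + d` costs the
factor `(2(√t + d)/r)ⁿ = (2(1 + u)²)ⁿ` with `u = d/√t`. Hence `m(B(y, √t))` is at most this factor
times the smaller of `m(B(x, r))`, `m(B(y, r))`, and so times their geometric mean. Finally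
`(1 + u)²ⁿ ≤ e^{2nu}` and `2nu ≤ 20n² + u²/20` absorb the factor into the Gaussian, lowering
`u²/4` to `u²/5`.
-/

lemma le_mul_sqrt_mul_of_le {M K a b : ℝ} (hK : 0 ≤ K) (ha : M ≤ K * a) (hb : M ≤ K * b) :
    M ≤ K * √(a * b) := by
  have hmin : min a b ≤ √(a * b) := by
    rcases le_or_gt (min a b) 0 with h | h
    · exact h.trans (sqrt_nonneg _)
    · rw [Real.le_sqrt h.le (by nlinarith [lt_min_iff.1 h]), sq]
      exact mul_le_mul (min_le_left a b) (min_le_right a b) h.le (h.le.trans (min_le_left a b))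
  calc M ≤ K * min a b := by rw [mul_min_of_nonneg _ _ hK]; exact le_min ha hb
    _ ≤ K * √(a * b) := by gcongr

lemma div_sqrt_le_mul_div {c K M A : ℝ} (hc : 0 ≤ c) (hM : 0 < M) (h : M ≤ K * √A) :
    c / √A ≤ c * K / M := by
  have hA : 0 < √A := (sqrt_nonneg A).lt_of_ne' fun h0 => by
    rw [h0, mul_zero] at h
    linarith
  rw [div_le_div_iff₀ hA hM, mul_assoc]
  exact mul_le_mul_of_nonneg_left h hc

def IsDoublingWith {X : Type*} [MetricSpace X] [MeasurableSpace X] (m : Measure X) (n : ℕ) :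
    Prop :=
  ∀ (x : X) (r : ℝ), 0 < r → m (closedBall x (2 * r)) ≤ 2 ^ n * m (closedBall x r)

namespace IsDoublingWith

variable {X : Type*} [MetricSpace X] [MeasurableSpace X] {m : Measure X} {n : ℕ}

lemma measure_closedBall_two_pow_mul_le (hm : IsDoublingWith m n) (z : X) {r : ℝ} (hr : 0 < r)
    (k : ℕ) : m (closedBall z (2 ^ k * r)) ≤ (2 ^ n) ^ k * m (closedBall z r) := by
  induction k with
  | zero => simp
  | succ k ih =>
    calc m (closedBall z (2 ^ (k + 1) * r)) = m (closedBall z (2 * (2 ^ k * r))) := by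
          rw [pow_succ', mul_assoc]
      _ ≤ 2 ^ n * m (closedBall z (2 ^ k * r)) := hm z _ (by positivity)
      _ ≤ 2 ^ n * ((2 ^ n) ^ k * m (closedBall z r)) := by gcongr
      _ = (2 ^ n) ^ (k + 1) * m (closedBall z r) := by rw [pow_succ', mul_assoc]

lemma toReal_measure_closedBall_le_of_subset (hm : IsDoublingWith m n) {x y : X} {r R ρ : ℝ}
    (hr : 0 < r) (hrR : r ≤ R) (hfin : m (closedBall x r) ≠ ⊤)
    (hsub : closedBall y ρ ⊆ closedBall x R) :
    (m (closedBall y ρ)).toReal ≤ (2 * R / r) ^ n * (m (closedBall x r)).toReal := by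
  obtain ⟨k, hk, hk'⟩ := exists_nat_pow_near ((one_le_div hr).2 hrR) one_lt_two
  have hR : R ≤ 2 ^ (k + 1) * r := ((div_lt_iff₀ hr).1 hk').le
  have h2k : (2 : ℝ) ^ (k + 1) ≤ 2 * R / r := by
    rw [pow_succ', mul_div_assoc]
    gcongr
  have hle : m (closedBall y ρ) ≤ (2 ^ n) ^ (k + 1) * m (closedBall x r) :=
    (measure_mono (hsub.trans (closedBall_subset_closedBall hR))).trans
      (hm.measure_closedBall_two_pow_mul_le x hr _)
  calc (m (closedBall y ρ)).toReal ≤ ((2 ^ n) ^ (k + 1) * m (closedBall x r)).toReal :=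
        ENNReal.toReal_mono (by finiteness) hle
    _ = (2 ^ (k + 1)) ^ n * (m (closedBall x r)).toReal := by simp [← pow_mul, mul_comm]
    _ ≤ (2 * R / r) ^ n * (m (closedBall x r)).toReal := by gcongr

lemma toReal_measure_closedBall_le_mul_sqrt (hm : IsDoublingWith m n) {x y : X} {r s : ℝ}
    (hr : 0 < r) (hrs : r ≤ s) (hx : m (closedBall x r) ≠ ⊤) (hy : m (closedBall y r) ≠ ⊤) :
    (m (closedBall y s)).toReal ≤ (2 * (s + dist x y) / r) ^ n
      * √((m (closedBall x r)).toReal * (m (closedBall y r)).toReal) := by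
  have hrR : r ≤ s + dist x y := le_add_of_le_of_nonneg hrs dist_nonneg
  exact le_mul_sqrt_mul_of_le (pow_nonneg (div_nonneg (by linarith) hr.le) n)
    (hm.toReal_measure_closedBall_le_of_subset hr hrR hx
      (closedBall_subset_closedBall' (by rw [dist_comm])))
    (hm.toReal_measure_closedBall_le_of_subset hr hrR hy
      (closedBall_subset_closedBall (le_add_of_nonneg_right dist_nonneg)))

end IsDoublingWith

lemma davies_exponent_le {s d : ℝ} (hs : 0 < s) (hd : 0 ≤ d) :
    (d / (2 * s ^ 2)) ^ 2 * s ^ 2 + d / (2 * s ^ 2) * (0 - d)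
        + |d / (2 * s ^ 2)| * (s ^ 2 / (s + d) + s ^ 2 / (s + d))
      ≤ 1 - (d / s) ^ 2 / 4 := by
  have hsd : 0 < s + d := by positivity
  have hsum : (d / (2 * s ^ 2)) ^ 2 * s ^ 2 + d / (2 * s ^ 2) * (0 - d)
      + |d / (2 * s ^ 2)| * (s ^ 2 / (s + d) + s ^ 2 / (s + d))
      = d / (s + d) - (d / s) ^ 2 / 4 := by
    rw [abs_of_nonneg (by positivity)]
    field_simp
    ring
  rw [hsum]
  linarith [(div_le_one hsd).2 (le_add_of_nonneg_left hs.le)]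

lemma two_mul_one_add_sq_pow_mul_exp_le (n : ℕ) {u : ℝ} (hu : 0 ≤ u) :
    (2 * (1 + u) ^ 2) ^ n * exp (1 - u ^ 2 / 4)
      ≤ 2 ^ n * exp (1 + 20 * n ^ 2) * exp (-u ^ 2 / 5) := by
  have hpoly : (2 * (1 + u) ^ 2) ^ n ≤ 2 ^ n * exp (2 * n * u) := by
    calc (2 * (1 + u) ^ 2) ^ n ≤ (2 * exp u ^ 2) ^ n := by
          gcongr
          linarith [add_one_le_exp u]
      _ = 2 ^ n * exp (2 * n * u) := by
          rw [mul_pow, ← pow_mul, ← exp_nat_mul]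
          push_cast
          ring_nf
  have hexp : 2 * n * u + (1 - u ^ 2 / 4) ≤ 1 + 20 * n ^ 2 + -u ^ 2 / 5 := by
    nlinarith [sq_nonneg (u - 20 * n)]
  calc (2 * (1 + u) ^ 2) ^ n * exp (1 - u ^ 2 / 4)
      ≤ 2 ^ n * (exp (2 * n * u) * exp (1 - u ^ 2 / 4)) := by
        rw [← mul_assoc]; gcongr
    _ ≤ 2 ^ n * (exp (1 + 20 * n ^ 2) * exp (-u ^ 2 / 5)) := by
        rw [← exp_add, ← exp_add]; gcongr
    _ = 2 ^ n * exp (1 + 20 * n ^ 2) * exp (-u ^ 2 / 5) := by ring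

/-- From Davies' off-diagonal bound (valid for every 1-Lipschitz `φ`, every
`α ∈ ℝ` and radii `r₁, r₂` with `t ≥ (r₁² + r₂²)/4`), together with doubling,
one deduces the Gaussian upper bound
`p(x,y,t) ≤ C(n) m(B(y,√t))⁻¹ exp(-d(x,y)²/(5t))`. -/
theorem stmt9 {X : Type*} [MetricSpace X] [MeasurableSpace X]
    (m : Measure X) (n : ℕ) (p : X → X → ℝ → ℝ) (C₀ : ℝ) (hC₀ : 0 < C₀)
    (hdouble : ∀ (x : X) (r : ℝ), 0 < r →
      m (closedBall x (2 * r)) ≤ 2 ^ n * m (closedBall x r))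
    (hballs : ∀ (x : X) (r : ℝ), 0 < r →
      0 < m (closedBall x r) ∧ m (closedBall x r) < ⊤)
    (hoff : ∀ (x y : X) (t : ℝ), 0 < t → ∀ φ : X → ℝ, LipschitzWith 1 φ →
      ∀ (α r₁ r₂ : ℝ), 0 < r₁ → 0 < r₂ → (r₁ ^ 2 + r₂ ^ 2) / 4 ≤ t →
      p x y t ≤ C₀ /
          Real.sqrt ((m (closedBall x r₁)).toReal * (m (closedBall y r₂)).toReal)
        * Real.exp (α ^ 2 * t + α * (φ x - φ y) + |α| * (r₁ + r₂))) :
    ∃ C : ℝ, 0 < C ∧ ∀ (x y : X) (t : ℝ), 0 < t →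
      p x y t ≤ C * ((m (closedBall y (Real.sqrt t))).toReal)⁻¹
        * Real.exp (-(dist x y) ^ 2 / (5 * t)) := by
  refine ⟨C₀ * 2 ^ n * exp (1 + 20 * n ^ 2), by positivity, fun x y t ht => ?_⟩
  obtain ⟨s, hs, rfl⟩ : ∃ s, 0 < s ∧ t = s ^ 2 := ⟨√t, sqrt_pos.2 ht, (sq_sqrt ht.le).symm⟩
  rw [sqrt_sq hs.le]
  set d := dist x y
  have hd : 0 ≤ d := dist_nonneg
  set r := s ^ 2 / (s + d)
  have hr : 0 < r := by positivity
  have hrs : r ≤ s := by rw [div_le_iff₀ (by positivity)]; nlinarith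
  have hK : 2 * (s + d) / r = 2 * (1 + d / s) ^ 2 := by simp only [r]; field_simp
  set M := (m (closedBall y s)).toReal
  have hM0 : 0 < M := ENNReal.toReal_pos (hballs y s hs).1.ne' (hballs y s hs).2.ne
  have hdavies := hoff x y (s ^ 2) ht _ (LipschitzWith.dist_right x) (d / (2 * s ^ 2)) r r hr hr
    (by nlinarith)
  rw [dist_self] at hdavies
  calc p x y (s ^ 2) ≤ C₀ * (2 * (1 + d / s) ^ 2) ^ n / M * exp (1 - (d / s) ^ 2 / 4) := by
        refine hdavies.trans (mul_le_mul ?_ (exp_le_exp.2 (davies_exponent_le hs hd))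
          (exp_nonneg _) (by positivity))
        refine div_sqrt_le_mul_div hC₀.le hM0 ?_
        rw [← hK]
        exact IsDoublingWith.toReal_measure_closedBall_le_mul_sqrt hdouble hr hrs
          (hballs x r hr).2.ne (hballs y r hr).2.ne
    _ = C₀ * M⁻¹ * ((2 * (1 + d / s) ^ 2) ^ n * exp (1 - (d / s) ^ 2 / 4)) := by ring
    _ ≤ C₀ * M⁻¹ * (2 ^ n * exp (1 + 20 * n ^ 2) * exp (-(d / s) ^ 2 / 5)) :=
        mul_le_mul_of_nonneg_left (two_mul_one_add_sq_pow_mul_exp_le n (by positivity))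
          (by positivity)
    _ = _ := by rw [div_pow]; ring_nf
end

section
/- Let $(M_\infty, \rho_\infty, \nu_\infty)$ be a metric measure space with heat kernel $p_\infty$, and suppose the ball-localized Dirichlet heat kernels $H_{R}$ on $B_\infty(y,R)$ (extended by zero) satisfy $p_\infty(x,y,t) - M_R \le H_R(x,y,t) \le p_\infty(x,y,t)$ where $M_R = \sup\{p_\infty(x,y,t): x \in \partial B_\infty(y,R), 0<t\le T\}$, and $p_\infty$ satisfies the Gaussian upper bound $p_\infty(x,y,t) \le C(n)\nu_\infty(B_\infty(y,\sqrt t))^{-1}e^{-\rho_\infty(x,y)^2/(5t)}$ with $\nu_\infty$ doubling and $\nu_\infty(B_\infty(y,1))=1$. Then $\|H_R(\cdot,y,t) - p_\infty(\cdot,y,t)\|_{L^1(\nu_\infty)} \le \epsilon(n,T,R)$ with $\lim_{R\to\infty}\epsilon(n,T,R) = 0$, uniformly for $t \in (0,T]$. -/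
/-!
Inside `B(y,R)` the sandwich gives `|H_R - p| ≤ M_R`; outside, `H_R = 0` and `|H_R - p| = p`.
Splitting the Gaussian `exp(-d²/5t) ≤ exp(-d²/10t) · exp(-R²/10T)` for `d ≥ R` keeps one factor
`exp(-R²/10T)`, which beats the polynomial volume growth `ν(B(y,R)) ≤ (2R)ⁿ` in `M_R ν(B(y,R))`,
while the other factor, integrated over the dyadic annuli `B(y, 2^(k+1)√t) \ B(y, 2^k √t)`, is
at most `K ν(B(y,√t))` with `K` depending only on the doubling constant, cancelling the volume
factor in the Gaussian bound.
-/

open MeasureTheory Metric Set Real Filter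
open scoped ENNReal NNReal Nat Topology

theorem exists_le_two_pow_mul_and_exp_neg_sq_le {a s d : ℝ} (ha : 0 < a) (hs : 0 < s) :
    ∃ k : ℕ, d ≤ 2 ^ (k + 1) * s ∧ exp (-d ^ 2 / (a * s ^ 2)) ≤ exp ((1 - 4 ^ k) / a) := by
  rcases lt_or_ge d s with hds | hsd
  · refine ⟨0, by rw [zero_add, pow_one]; linarith, exp_le_exp.2 ?_⟩
    rw [pow_zero, sub_self, zero_div]
    exact div_nonpos_of_nonpos_of_nonneg (by nlinarith) (by positivity)
  obtain ⟨k, hkd, hdk⟩ := exists_nat_pow_near ((one_le_div hs).2 hsd) one_lt_two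
  rw [le_div_iff₀ hs] at hkd
  rw [div_lt_iff₀ hs] at hdk
  refine ⟨k, hdk.le, exp_le_exp.2 ?_⟩
  have h4 : (4 : ℝ) ^ k * s ^ 2 ≤ d ^ 2 := by
    rw [show (4 : ℝ) = 2 ^ 2 by norm_num, ← pow_mul, mul_comm 2 k, pow_mul, ← mul_pow]
    exact pow_le_pow_left₀ (by positivity) hkd 2
  rw [div_le_div_iff₀ (by positivity) ha]
  nlinarith [mul_pos ha (pow_pos hs 2)]

theorem summable_exp_one_sub_four_pow_div_mul_pow {a : ℝ} (ha : 0 < a) (q : ℝ) :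
    Summable fun k : ℕ => exp ((1 - 4 ^ k) / a) * q ^ (k + 1) := by
  have hratio : Tendsto (fun k : ℕ => exp (-(3 * 4 ^ k / a)) * |q|) atTop (𝓝 0) := by
    have h4 : Tendsto (fun k : ℕ => 3 * (4 : ℝ) ^ k / a) atTop atTop :=
      ((tendsto_pow_atTop_atTop_of_one_lt (by norm_num)).const_mul_atTop
        (by norm_num)).atTop_div_const ha
    simpa using (tendsto_exp_neg_atTop_nhds_zero.comp h4).mul_const |q|
  refine summable_of_ratio_norm_eventually_le (r := 1 / 2) (by norm_num) ?_
  filter_upwards [hratio.eventually_le_const (by norm_num : (0 : ℝ) < 1 / 2)] with k hk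
  have hsplit : exp ((1 - 4 ^ (k + 1)) / a) = exp ((1 - 4 ^ k) / a) * exp (-(3 * 4 ^ k / a)) := by
    rw [← exp_add]; ring_nf
  calc ‖exp ((1 - 4 ^ (k + 1)) / a) * q ^ (k + 1 + 1)‖
      = ‖exp ((1 - 4 ^ k) / a) * q ^ (k + 1)‖ * (exp (-(3 * 4 ^ k / a)) * |q|) := by
        simp only [norm_mul, norm_pow, Real.norm_eq_abs, abs_exp, hsplit]; ring
    _ ≤ ‖exp ((1 - 4 ^ k) / a) * q ^ (k + 1)‖ * (1 / 2) := by gcongr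
    _ = 1 / 2 * ‖exp ((1 - 4 ^ k) / a) * q ^ (k + 1)‖ := mul_comm _ _

theorem pow_mul_exp_neg_sq_div_le {u c : ℝ} (hu : 1 ≤ u) (hc : 0 < c) (n : ℕ) :
    u ^ n * exp (-u ^ 2 / c) ≤ c ^ n * n ! := by
  have hfact := pow_div_factorial_le_exp (x := u ^ 2 / c) (by positivity) n
  rw [div_le_iff₀ (by positivity)] at hfact
  calc u ^ n * exp (-u ^ 2 / c) ≤ (u ^ 2) ^ n * exp (-u ^ 2 / c) := by
        gcongr
        nlinarith
    _ = c ^ n * ((u ^ 2 / c) ^ n * exp (-(u ^ 2 / c))) := by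
        rw [div_pow, neg_div]; field_simp
    _ ≤ c ^ n * (exp (u ^ 2 / c) * n ! * exp (-(u ^ 2 / c))) := by gcongr
    _ = c ^ n * n ! := by rw [mul_right_comm, ← exp_add, add_neg_cancel, exp_zero, one_mul]

theorem exp_neg_sq_div_five_le {d R t T : ℝ} (hR : 0 ≤ R) (hRd : R ≤ d) (ht : 0 < t)
    (htT : t ≤ T) :
    exp (-d ^ 2 / (5 * t)) ≤ exp (-d ^ 2 / (10 * t)) * exp (-R ^ 2 / (10 * T)) := by
  rw [← exp_add, exp_le_exp]
  have hRT : R ^ 2 / (10 * T) ≤ d ^ 2 / (10 * t) := by gcongr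
  have : -d ^ 2 / (5 * t) = -d ^ 2 / (10 * t) - d ^ 2 / (10 * t) := by
    field_simp; ring
  rw [this, neg_div _ (R ^ 2)]
  linarith

theorem tendsto_pow_mul_exp_neg_sq_div {c : ℝ} (hc : 0 < c) (n : ℕ) :
    Tendsto (fun R : ℝ => R ^ n * exp (-R ^ 2 / c)) atTop (𝓝 0) := by
  refine ((tendsto_rpow_abs_mul_exp_neg_mul_sq_cocompact (inv_pos.2 hc) n).mono_left
    atTop_le_cocompact).congr' ?_
  filter_upwards [eventually_ge_atTop 0] with R hR
  rw [abs_of_nonneg hR, rpow_natCast, neg_mul, inv_mul_eq_div, neg_div]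

theorem tendsto_exp_neg_max_sq_div {c : ℝ} (hc : 0 < c) :
    Tendsto (fun R : ℝ => exp (-max R 0 ^ 2 / c)) atTop (𝓝 0) := by
  have h : Tendsto (fun R : ℝ => exp (-R ^ 2 / c)) atTop (𝓝 0) := by
    simpa using tendsto_pow_mul_exp_neg_sq_div hc 0
  refine h.congr' ?_
  filter_upwards [eventually_ge_atTop 0] with R hR
  rw [max_eq_left hR]

theorem lintegral_le_mul_measure_add_lintegral {α : Type*} [MeasurableSpace α] {μ : Measure α}
    {f g : α → ℝ≥0∞} {s : Set α} {c : ℝ≥0∞} (hs : ∀ x ∈ s, f x ≤ c) (hsc : ∀ x ∉ s, f x ≤ g x) :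
    ∫⁻ x, f x ∂μ ≤ c * μ s + ∫⁻ x, g x ∂μ := by
  calc ∫⁻ x, f x ∂μ ≤ ∫⁻ x, ((toMeasurable μ s).indicator (fun _ => c) x + g x) ∂μ := by
        refine lintegral_mono fun x => ?_
        by_cases hx : x ∈ s
        · rw [indicator_of_mem (subset_toMeasurable μ s hx)]
          exact le_add_right (hs x hx)
        · exact le_add_left (hsc x hx)
    _ = c * μ s + ∫⁻ x, g x ∂μ := by
        rw [lintegral_add_left (measurable_const.indicator (measurableSet_toMeasurable μ s)),
          lintegral_indicator_const (measurableSet_toMeasurable μ s), measure_toMeasurable]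

section Doubling

variable {X : Type*} [MetricSpace X] [MeasurableSpace X]

def IsDoublingAt (ν : Measure X) (y : X) (n : ℕ) : Prop :=
  ∀ r : ℝ, 0 < r → ν (closedBall y (2 * r)) ≤ 2 ^ n * ν (closedBall y r)

variable {ν : Measure X} {y : X} {n : ℕ}

theorem IsDoublingAt.measure_closedBall_two_pow_mul_le (hν : IsDoublingAt ν y n) (k : ℕ)
    {r : ℝ} (hr : 0 < r) :
    ν (closedBall y (2 ^ k * r)) ≤ (2 ^ k) ^ n * ν (closedBall y r) := by
  induction k with
  | zero => simp
  | succ k ih =>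
    calc ν (closedBall y (2 ^ (k + 1) * r)) = ν (closedBall y (2 * (2 ^ k * r))) := by
          rw [pow_succ', mul_assoc]
      _ ≤ 2 ^ n * ν (closedBall y (2 ^ k * r)) := hν _ (by positivity)
      _ ≤ 2 ^ n * ((2 ^ k) ^ n * ν (closedBall y r)) := by gcongr
      _ = (2 ^ (k + 1)) ^ n * ν (closedBall y r) := by ring

theorem IsDoublingAt.measure_closedBall_le (hν : IsDoublingAt ν y n) {r R : ℝ} (hr : 0 < r)
    (hrR : r ≤ R) :
    ν (closedBall y R) ≤ ENNReal.ofReal (2 * R / r) ^ n * ν (closedBall y r) := by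
  obtain ⟨k, hkR, hRk⟩ := exists_nat_pow_near ((one_le_div hr).2 hrR) one_lt_two
  have hpow : (2 : ℝ≥0∞) ^ (k + 1) ≤ ENNReal.ofReal (2 * R / r) := by
    rw [← ENNReal.ofReal_ofNat, ← ENNReal.ofReal_pow zero_le_two]
    refine ENNReal.ofReal_le_ofReal ?_
    rw [pow_succ', mul_div_assoc]
    gcongr
  calc ν (closedBall y R) ≤ ν (closedBall y (2 ^ (k + 1) * r)) :=
        measure_mono (closedBall_subset_closedBall ((div_le_iff₀ hr).1 hRk.le))
    _ ≤ (2 ^ (k + 1)) ^ n * ν (closedBall y r) := hν.measure_closedBall_two_pow_mul_le _ hr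
    _ ≤ ENNReal.ofReal (2 * R / r) ^ n * ν (closedBall y r) := by gcongr

theorem IsDoublingAt.measure_closedBall_ne_top (hν : IsDoublingAt ν y n)
    (hnorm : ν (closedBall y 1) = 1) (r : ℝ) : ν (closedBall y r) ≠ ∞ := by
  rcases le_total r 1 with hr | hr
  · exact ne_top_of_le_ne_top (by simp [hnorm]) (measure_mono (closedBall_subset_closedBall hr))
  · exact ne_top_of_le_ne_top (ENNReal.mul_ne_top (ENNReal.pow_ne_top ENNReal.ofReal_ne_top)
      (by simp [hnorm])) (hν.measure_closedBall_le one_pos hr)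

theorem IsDoublingAt.toReal_measure_closedBall_le (hν : IsDoublingAt ν y n)
    (hnorm : ν (closedBall y 1) = 1) {R : ℝ} (hR : 1 ≤ R) :
    (ν (closedBall y R)).toReal ≤ (2 * R) ^ n := by
  have h := hν.measure_closedBall_le one_pos hR
  rw [hnorm, mul_one, div_one, ← ENNReal.ofReal_pow (by linarith)] at h
  exact ENNReal.toReal_le_of_le_ofReal (by positivity) h

theorem IsDoublingAt.inv_toReal_measure_closedBall_le (hν : IsDoublingAt ν y n)
    (hnorm : ν (closedBall y 1) = 1) {s : ℝ} (hs : 0 < s) (hs1 : s ≤ 1) :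
    (ν (closedBall y s)).toReal⁻¹ ≤ (2 / s) ^ n := by
  have h := hν.measure_closedBall_le hs hs1
  rw [hnorm, mul_one, ← ENNReal.ofReal_pow (by positivity)] at h
  have h' := ENNReal.toReal_mono
    (ENNReal.mul_ne_top ENNReal.ofReal_ne_top (hν.measure_closedBall_ne_top hnorm s)) h
  rw [ENNReal.toReal_one, ENNReal.toReal_mul, ENNReal.toReal_ofReal (by positivity)] at h'
  have hpos : 0 < (ν (closedBall y s)).toReal :=
    pos_of_mul_pos_right (one_pos.trans_le h') (by positivity)
  exact (inv_le_iff_one_le_mul₀ hpos).2 h'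

theorem one_le_toReal_measure_closedBall (hnorm : ν (closedBall y 1) = 1)
    {r : ℝ} (hfin : ν (closedBall y r) ≠ ∞) (hr : 1 ≤ r) : 1 ≤ (ν (closedBall y r)).toReal := by
  simpa [hnorm] using
    ENNReal.toReal_mono hfin (measure_mono (μ := ν) (closedBall_subset_closedBall hr))

theorem IsDoublingAt.exists_lintegral_exp_neg_dist_sq_le (hν : IsDoublingAt ν y n) {a : ℝ}
    (ha : 0 < a) :
    ∃ K : ℝ≥0, ∀ s : ℝ, 0 < s →
      ∫⁻ x, ENNReal.ofReal (exp (-dist x y ^ 2 / (a * s ^ 2))) ∂ν ≤ K * ν (closedBall y s) := by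
  set w : ℕ → ℝ := fun k => exp ((1 - 4 ^ k) / a)
  have hsum := summable_exp_one_sub_four_pow_div_mul_pow ha (2 ^ n)
  refine ⟨(∑' k, w k * (2 ^ n) ^ (k + 1)).toNNReal, fun s hs => ?_⟩
  set B : ℕ → Set X := fun k => toMeasurable ν (closedBall y (2 ^ (k + 1) * s))
  have hpt : ∀ x, ENNReal.ofReal (exp (-dist x y ^ 2 / (a * s ^ 2)))
      ≤ ∑' k, (B k).indicator (fun _ => ENNReal.ofReal (w k)) x := by
    intro x
    obtain ⟨k, hxk, hexp⟩ := exists_le_two_pow_mul_and_exp_neg_sq_le (d := dist x y) ha hs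
    refine le_trans ?_ (ENNReal.le_tsum k)
    rw [indicator_of_mem (subset_toMeasurable _ _ (mem_closedBall.2 hxk))]
    exact ENNReal.ofReal_le_ofReal hexp
  calc ∫⁻ x, ENNReal.ofReal (exp (-dist x y ^ 2 / (a * s ^ 2))) ∂ν
      ≤ ∫⁻ x, ∑' k, (B k).indicator (fun _ => ENNReal.ofReal (w k)) x ∂ν := lintegral_mono hpt
    _ = ∑' k, ENNReal.ofReal (w k) * ν (closedBall y (2 ^ (k + 1) * s)) := by
        rw [lintegral_tsum fun k => (measurable_const.indicator
          (measurableSet_toMeasurable _ _)).aemeasurable]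
        simp only [lintegral_indicator_const (measurableSet_toMeasurable _ _),
          measure_toMeasurable]
    _ ≤ ∑' k, ENNReal.ofReal (w k) * ((2 ^ (k + 1)) ^ n * ν (closedBall y s)) := by
        gcongr with k
        exact hν.measure_closedBall_two_pow_mul_le _ hs
    _ = ENNReal.ofReal (∑' k, w k * (2 ^ n) ^ (k + 1)) * ν (closedBall y s) := by
        rw [ENNReal.ofReal_tsum_of_nonneg (fun k => by positivity) hsum, ← ENNReal.tsum_mul_right]
        congr 1 with k
        rw [ENNReal.ofReal_mul (exp_nonneg _), ENNReal.ofReal_pow (by positivity),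
          ENNReal.ofReal_pow zero_le_two, ENNReal.ofReal_ofNat, pow_right_comm, mul_assoc]

theorem IsDoublingAt.inv_toReal_measure_mul_exp_le (hν : IsDoublingAt ν y n)
    (hnorm : ν (closedBall y 1) = 1) {R t : ℝ} (hR : 1 ≤ R) (ht : 0 < t) :
    (ν (closedBall y √t)).toReal⁻¹ * exp (-R ^ 2 / (10 * t)) ≤ 20 ^ n * n ! := by
  rcases le_total √t 1 with hs1 | hs1
  · have hs : 0 < √t := sqrt_pos.2 ht
    have hu : 1 ≤ (√t)⁻¹ := (one_le_inv₀ hs).2 hs1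
    have hexp : exp (-R ^ 2 / (10 * t)) ≤ exp (-(√t)⁻¹ ^ 2 / 10) := by
      rw [exp_le_exp, inv_pow, sq_sqrt ht.le, div_le_div_iff₀ (by positivity) (by norm_num)]
      field_simp
      nlinarith
    calc (ν (closedBall y √t)).toReal⁻¹ * exp (-R ^ 2 / (10 * t))
        ≤ (2 / √t) ^ n * exp (-(√t)⁻¹ ^ 2 / 10) :=
          mul_le_mul (hν.inv_toReal_measure_closedBall_le hnorm hs hs1) hexp (exp_nonneg _)
            (by positivity)
      _ = 2 ^ n * ((√t)⁻¹ ^ n * exp (-(√t)⁻¹ ^ 2 / 10)) := by rw [div_eq_mul_inv, mul_pow]; ring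
      _ ≤ 2 ^ n * (10 ^ n * n !) :=
          mul_le_mul_of_nonneg_left (pow_mul_exp_neg_sq_div_le hu (by norm_num) n) (by positivity)
      _ = 20 ^ n * n ! := by rw [← mul_assoc, ← mul_pow]; norm_num
  · have hV : 1 ≤ (ν (closedBall y √t)).toReal :=
      one_le_toReal_measure_closedBall hnorm (hν.measure_closedBall_ne_top hnorm _) hs1
    have hexp : exp (-R ^ 2 / (10 * t)) ≤ 1 :=
      exp_le_one_iff.2 (div_nonpos_of_nonpos_of_nonneg (by nlinarith) (by positivity))
    calc (ν (closedBall y √t)).toReal⁻¹ * exp (-R ^ 2 / (10 * t)) ≤ 1 * 1 :=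
          mul_le_mul (inv_le_one_of_one_le₀ hV) hexp (exp_nonneg _) zero_le_one
      _ ≤ 20 ^ n * n ! := by
          rw [one_mul]
          exact one_le_mul_of_one_le_of_one_le (one_le_pow₀ (by norm_num))
            (Nat.one_le_cast.2 n.factorial_pos)

theorem IsDoublingAt.sSup_boundary_le (hν : IsDoublingAt ν y n)
    (hnorm : ν (closedBall y 1) = 1) {p : X → ℝ → ℝ} {C₀ R T : ℝ} (hC₀ : 0 ≤ C₀) (hR : 1 ≤ R)
    (hgauss : ∀ x t, 0 < t →
      p x t ≤ C₀ * (ν (closedBall y √t)).toReal⁻¹ * exp (-dist x y ^ 2 / (5 * t))) :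
    sSup {v : ℝ | ∃ x t, dist x y = R ∧ 0 < t ∧ t ≤ T ∧ v = p x t}
      ≤ C₀ * (20 ^ n * n !) * exp (-R ^ 2 / (10 * T)) := by
  refine Real.sSup_le ?_ (by positivity)
  rintro _ ⟨x, t, rfl, ht, htT, rfl⟩
  calc p x t ≤ C₀ * (ν (closedBall y √t)).toReal⁻¹ * exp (-dist x y ^ 2 / (5 * t)) :=
        hgauss x t ht
    _ ≤ C₀ * (ν (closedBall y √t)).toReal⁻¹
          * (exp (-dist x y ^ 2 / (10 * t)) * exp (-dist x y ^ 2 / (10 * T))) := by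
        gcongr
        exact exp_neg_sq_div_five_le dist_nonneg le_rfl ht htT
    _ = C₀ * ((ν (closedBall y √t)).toReal⁻¹ * exp (-dist x y ^ 2 / (10 * t)))
          * exp (-dist x y ^ 2 / (10 * T)) := by ring
    _ ≤ C₀ * (20 ^ n * n !) * exp (-dist x y ^ 2 / (10 * T)) := by
        gcongr C₀ * ?_ * _
        exact hν.inv_toReal_measure_mul_exp_le hnorm hR ht

theorem IsDoublingAt.tendsto_mul_toReal_measure_closedBall (hν : IsDoublingAt ν y n)
    (hnorm : ν (closedBall y 1) = 1) {M : ℝ → ℝ} {B c : ℝ} (hB : 0 ≤ B) (hc : 0 < c)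
    (hM : ∀ R, 1 ≤ R → M R ≤ B * exp (-R ^ 2 / c)) :
    Tendsto (fun R => max (M R) 0 * (ν (closedBall y R)).toReal) atTop (𝓝 0) := by
  have hlim := (tendsto_pow_mul_exp_neg_sq_div hc n).const_mul (B * 2 ^ n)
  rw [mul_zero] at hlim
  refine squeeze_zero' (Eventually.of_forall fun R => by positivity) ?_ hlim
  filter_upwards [eventually_ge_atTop 1] with R hR
  calc max (M R) 0 * (ν (closedBall y R)).toReal ≤ B * exp (-R ^ 2 / c) * (2 * R) ^ n := by
        gcongr
        · exact max_le (hM R hR) (by positivity)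
        · exact hν.toReal_measure_closedBall_le hnorm hR
    _ = B * 2 ^ n * (R ^ n * exp (-R ^ 2 / c)) := by ring

theorem IsDoublingAt.integral_abs_sub_le (hν : IsDoublingAt ν y n)
    (hnorm : ν (closedBall y 1) = 1) {p H : X → ℝ} {C₀ M R t T : ℝ} {K : ℝ≥0} (hC₀ : 0 ≤ C₀)
    (hM : 0 ≤ M) (ht : 0 < t) (htT : t ≤ T)
    (hK : ∫⁻ x, ENNReal.ofReal (exp (-dist x y ^ 2 / (10 * √t ^ 2))) ∂ν
      ≤ K * ν (closedBall y √t))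
    (hin : ∀ x ∈ closedBall y R, |H x - p x| ≤ M)
    (hout : ∀ x ∉ closedBall y R, |H x - p x| ≤ p x)
    (hgauss : ∀ x, p x ≤ C₀ * (ν (closedBall y √t)).toReal⁻¹ * exp (-dist x y ^ 2 / (5 * t))) :
    ∫ x, |H x - p x| ∂ν
      ≤ M * (ν (closedBall y R)).toReal + C₀ * K * exp (-max R 0 ^ 2 / (10 * T)) := by
  set V := (ν (closedBall y √t)).toReal
  set τ := exp (-max R 0 ^ 2 / (10 * T))
  have htail : ∀ x ∉ closedBall y R, ENNReal.ofReal |H x - p x|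
      ≤ ENNReal.ofReal (C₀ * V⁻¹ * τ) * ENNReal.ofReal (exp (-dist x y ^ 2 / (10 * √t ^ 2))) := by
    intro x hx
    have hRx : max R 0 ≤ dist x y := max_le (not_le.1 hx).le dist_nonneg
    rw [← ENNReal.ofReal_mul (by positivity), sq_sqrt ht.le]
    refine ENNReal.ofReal_le_ofReal ((hout x hx).trans ((hgauss x).trans ?_))
    calc C₀ * V⁻¹ * exp (-dist x y ^ 2 / (5 * t))
        ≤ C₀ * V⁻¹ * (exp (-dist x y ^ 2 / (10 * t)) * τ) := by
          gcongr
          exact exp_neg_sq_div_five_le (le_max_right _ _) hRx ht htT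
      _ = C₀ * V⁻¹ * τ * exp (-dist x y ^ 2 / (10 * t)) := by ring
  have hcancel : ENNReal.ofReal V⁻¹ * ν (closedBall y √t) ≤ 1 := by
    rw [← ENNReal.ofReal_toReal (hν.measure_closedBall_ne_top hnorm √t),
      ← ENNReal.ofReal_mul (by positivity)]
    exact ENNReal.ofReal_le_one.2 inv_mul_le_one
  have hlint : ∫⁻ x, ENNReal.ofReal |H x - p x| ∂ν
      ≤ ENNReal.ofReal (M * (ν (closedBall y R)).toReal + C₀ * K * τ) :=
    calc ∫⁻ x, ENNReal.ofReal |H x - p x| ∂ν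
        ≤ ENNReal.ofReal M * ν (closedBall y R) + ENNReal.ofReal (C₀ * V⁻¹ * τ)
            * ∫⁻ x, ENNReal.ofReal (exp (-dist x y ^ 2 / (10 * √t ^ 2))) ∂ν := by
          rw [← lintegral_const_mul' _ _ ENNReal.ofReal_ne_top]
          exact lintegral_le_mul_measure_add_lintegral
            (fun x hx => ENNReal.ofReal_le_ofReal (hin x hx)) htail
      _ ≤ ENNReal.ofReal M * ν (closedBall y R)
            + ENNReal.ofReal (C₀ * V⁻¹ * τ) * (K * ν (closedBall y √t)) := by gcongr
      _ = ENNReal.ofReal M * ν (closedBall y R)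
            + ENNReal.ofReal (C₀ * τ) * K * (ENNReal.ofReal V⁻¹ * ν (closedBall y √t)) := by
          rw [mul_right_comm C₀, ENNReal.ofReal_mul (by positivity : 0 ≤ C₀ * τ)]
          ring
      _ ≤ ENNReal.ofReal (M * (ν (closedBall y R)).toReal + C₀ * K * τ) := by
          rw [ENNReal.ofReal_add (by positivity) (by positivity), ENNReal.ofReal_mul hM,
            ENNReal.ofReal_toReal (hν.measure_closedBall_ne_top hnorm R), mul_right_comm C₀,
            ENNReal.ofReal_mul (by positivity : 0 ≤ C₀ * τ), ENNReal.ofReal_coe_nnreal]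
          gcongr _ + ?_
          exact mul_le_of_le_one_right zero_le hcancel
  calc ∫ x, |H x - p x| ∂ν ≤ (∫⁻ x, ENNReal.ofReal |H x - p x| ∂ν).toReal := by
        simpa using (le_abs_self _).trans
          (norm_integral_le_lintegral_norm (μ := ν) fun x => |H x - p x|)
    _ ≤ M * (ν (closedBall y R)).toReal + C₀ * K * τ :=
        ENNReal.toReal_le_of_le_ofReal (by positivity) hlint

end Doubling

/-- `L¹`-convergence of the localized Dirichlet heat kernels `H_R(·,y,t)` to the
heat kernel `p_∞(·,y,t)` on a doubling metric measure space with a Gaussian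
upper bound, uniformly for `t ∈ (0,T]`. -/
theorem stmt16 {X : Type*} [MetricSpace X] [MeasurableSpace X]
    (ν : Measure X) (n : ℕ) (y : X) (T : ℝ) (hT : 0 < T)
    (p : X → ℝ → ℝ) (HR : ℝ → X → ℝ → ℝ) (MR : ℝ → ℝ) (C₀ : ℝ) (hC₀ : 0 < C₀)
    (hMR : ∀ R : ℝ, MR R
      = sSup {v : ℝ | ∃ x t, dist x y = R ∧ 0 < t ∧ t ≤ T ∧ v = p x t})
    -- maximum-principle sandwich
    (hsand : ∀ R : ℝ, ∀ x ∈ closedBall y R, ∀ t : ℝ, 0 < t → t ≤ T →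
      p x t - MR R ≤ HR R x t ∧ HR R x t ≤ p x t)
    (hout : ∀ R : ℝ, ∀ x, x ∉ closedBall y R → ∀ t : ℝ, HR R x t = 0)
    (hpnn : ∀ x t, 0 < t → 0 ≤ p x t)
    -- Gaussian upper bound
    (hgauss : ∀ x t, 0 < t →
      p x t ≤ C₀ * ((ν (closedBall y (Real.sqrt t))).toReal)⁻¹
        * Real.exp (-(dist x y) ^ 2 / (5 * t)))
    -- doubling and normalization
    (hdouble : ∀ (x : X) (r : ℝ), 0 < r →
      ν (closedBall x (2 * r)) ≤ 2 ^ n * ν (closedBall x r))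
    (hnorm : ν (closedBall y 1) = 1) :
    ∃ ε : ℝ → ℝ, Tendsto ε atTop (nhds 0) ∧
      ∀ R : ℝ, ∀ t : ℝ, 0 < t → t ≤ T →
        ∫ x, |HR R x t - p x t| ∂ν ≤ ε R := by
  have hν : IsDoublingAt ν y n := hdouble y
  obtain ⟨K, hK⟩ := hν.exists_lintegral_exp_neg_dist_sq_le (a := 10) (by norm_num)
  refine ⟨fun R => max (MR R) 0 * (ν (closedBall y R)).toReal
      + C₀ * K * exp (-max R 0 ^ 2 / (10 * T)), ?_, fun R t ht htT => ?_⟩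
  · have hboundary := hν.tendsto_mul_toReal_measure_closedBall hnorm (M := MR)
      (by positivity : 0 ≤ C₀ * (20 ^ n * n !)) (by positivity : 0 < 10 * T)
      fun R hR => (hMR R).trans_le (hν.sSup_boundary_le hnorm hC₀.le hR hgauss)
    have htail := (tendsto_exp_neg_max_sq_div (by positivity : 0 < 10 * T)).const_mul (C₀ * K)
    simpa using hboundary.add htail
  · refine hν.integral_abs_sub_le hnorm hC₀.le (le_max_right _ _) ht htT (hK _ (sqrt_pos.2 ht))
      (fun x hx => ?_) (fun x hx => ?_) (fun x => hgauss x t ht)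
    · obtain ⟨hlow, hup⟩ := hsand R x hx t ht htT
      rw [abs_of_nonpos (sub_nonpos.2 hup), neg_sub]
      exact (sub_le_comm.1 hlow).trans (le_max_left _ _)
    · rw [hout R x hx t, zero_sub, abs_neg, abs_of_nonneg (hpnn x t ht)]
end
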